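/- Let N ≥ 2 be an integer. On a common probability space let W have the Gamma(N−1,1) distribution, let X and Z be independent random variables each with the Gamma(N,1) distribution, and let Y be any nonnegative random variable (W and Y may depend arbitrarily on the other variables). Fix θ ∈ (0,1) and η, d₁, d_I, d₂, γ, ρ_I > 0. Then lim_{ρ→∞} ρ^{N−1} · Prob( min( (1−θ)·ρ·W/d₁ , (η·θ/d₂)·(ρ·X/d₁ + ρ_I·Y/d_I)·Z ) < γ ) = (d₁·γ/(1−θ))^{N−1} / (N−1)!. In particular the ZF/MRT scheme achieves diversity order N−1. -/

import Mathlib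

open MeasureTheory ProbabilityTheory Filter Real Set Topology
open scoped ENNReal

/-! The outage event contains `{W < c/ρ}` with `c = d₁γ/(1-θ)`, and, off the null event `{Z ≤ 0}`,
it is contained in `{W < c/ρ} ∪ {XZ < s/ρ}` with `s = γd₁d₂/(ηθ)`, by dropping the nonnegative
interference term `ρ_I Y/d_I`. On `(0, t]` the Gamma(a, r) density is `r^a x^(a-1)/Γ(a)` times
`e^{-rx} ∈ [e^{-rt}, 1]`, so `P(W < t) ~ (rt)^a/Γ(a+1)` as `t → 0`; this gives the limit of the
first term. Conditioning on `X`, `P(XZ < u) ≤ K u^q E[X^{-q}]` for every `q ∈ [0, N]`, and the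
negative moment is finite for `q < N`; taking `q ∈ (N-1, N)` makes the second term
`O(ρ^{N-1-q}) → 0`. -/

namespace ProbabilityTheory

variable {a r t : ℝ}

@[fun_prop]
lemma measurable_gammaPDF : Measurable (gammaPDF a r) :=
  (measurable_gammaPDFReal a r).ennreal_ofReal

lemma lintegral_Ioc_ofReal_mul_rpow_sub_one {C : ℝ} (ha : 0 < a) (hC : 0 ≤ C) (ht : 0 ≤ t) :
    ∫⁻ x in Ioc 0 t, ENNReal.ofReal (C * x ^ (a - 1)) = ENNReal.ofReal (C * (t ^ a / a)) := by
  have hint : IntegrableOn (fun x : ℝ ↦ C * x ^ (a - 1)) (Ioc 0 t) :=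
    ((intervalIntegral.intervalIntegrable_rpow' (by linarith)).const_mul C).1
  rw [← ofReal_integral_eq_lintegral_ofReal hint
    (ae_restrict_of_forall_mem measurableSet_Ioc fun x hx ↦ by have := hx.1; positivity),
    integral_const_mul, ← intervalIntegral.integral_of_le ht,
    integral_rpow (Or.inl (by linarith)), sub_add_cancel, zero_rpow ha.ne']
  simp

lemma gammaMeasure_Iio_eq_lintegral_Ioc (ht : 0 ≤ t) :
    gammaMeasure a r (Iio t) = ∫⁻ x in Ioc 0 t, gammaPDF a r x := by
  rw [gammaMeasure, withDensity_apply _ measurableSet_Iio, setLIntegral_congr Iio_ae_eq_Iic,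
    lintegral_Iic_eq_lintegral_Iio_add_Icc _ ht, lintegral_gammaPDF_of_nonpos le_rfl, zero_add,
    setLIntegral_congr Ioc_ae_eq_Icc.symm]

lemma mul_rpow_div_Gamma_add_one (ha : 0 < a) (hr : 0 ≤ r) (ht : 0 ≤ t) :
    (r * t) ^ a / Gamma (a + 1) = r ^ a / Gamma a * (t ^ a / a) := by
  rw [mul_rpow hr ht, Gamma_add_one ha.ne']
  have := Gamma_pos_of_pos ha
  field_simp

lemma gammaMeasure_Iio_le (ha : 0 < a) (hr : 0 < r) (ht : 0 ≤ t) :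
    gammaMeasure a r (Iio t) ≤ ENNReal.ofReal ((r * t) ^ a / Gamma (a + 1)) := by
  rw [gammaMeasure_Iio_eq_lintegral_Ioc ht, mul_rpow_div_Gamma_add_one ha hr.le ht,
    ← lintegral_Ioc_ofReal_mul_rpow_sub_one ha (by positivity) ht]
  refine setLIntegral_mono (by fun_prop) fun x hx ↦ ?_
  rw [gammaPDF_of_nonneg hx.1.le]
  refine ENNReal.ofReal_le_ofReal (mul_le_of_le_one_right (by have := hx.1; positivity) ?_)
  exact exp_le_one_iff.2 (neg_nonpos.2 (by have := hx.1; positivity))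

lemma ofReal_exp_mul_le_gammaMeasure_Iio (ha : 0 < a) (hr : 0 < r) (ht : 0 ≤ t) :
    ENNReal.ofReal (exp (-(r * t)) * ((r * t) ^ a / Gamma (a + 1))) ≤ gammaMeasure a r (Iio t) := by
  rw [gammaMeasure_Iio_eq_lintegral_Ioc ht, mul_rpow_div_Gamma_add_one ha hr.le ht, ← mul_assoc,
    ← lintegral_Ioc_ofReal_mul_rpow_sub_one ha (by positivity) ht]
  refine setLIntegral_mono measurable_gammaPDF fun x hx ↦ ?_
  rw [gammaPDF_of_nonneg hx.1.le, mul_comm (exp _), mul_right_comm _ (exp _)]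
  have := hx.1
  gcongr
  exact hx.2

lemma tendsto_measureReal_gammaMeasure_Iio_div_rpow (ha : 0 < a) (hr : 0 < r) :
    Tendsto (fun t ↦ (gammaMeasure a r).real (Iio t) / t ^ a) (𝓝[>] 0)
      (𝓝 (r ^ a / Gamma (a + 1))) := by
  have := isProbabilityMeasure_gammaMeasure ha hr
  have hexp : Tendsto (fun t ↦ exp (-(r * t)) * (r ^ a / Gamma (a + 1))) (𝓝[>] 0)
      (𝓝 (r ^ a / Gamma (a + 1))) := by
    have : Continuous fun t ↦ exp (-(r * t)) * (r ^ a / Gamma (a + 1)) := by fun_prop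
    simpa using this.continuousWithinAt (s := Ioi 0) (x := 0) |>.tendsto
  refine tendsto_of_tendsto_of_tendsto_of_le_of_le' hexp tendsto_const_nhds ?_ ?_ <;>
    filter_upwards [self_mem_nhdsWithin] with t (ht : 0 < t)
  · rw [le_div_iff₀ (by positivity)]
    calc _ = exp (-(r * t)) * ((r * t) ^ a / Gamma (a + 1)) := by rw [mul_rpow hr.le ht.le]; ring
      _ ≤ _ := (ENNReal.ofReal_le_iff_le_toReal (measure_ne_top _ _)).1
          (ofReal_exp_mul_le_gammaMeasure_Iio ha hr ht.le)
  · rw [div_le_iff₀ (by positivity)]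
    calc _ ≤ (r * t) ^ a / Gamma (a + 1) :=
          ENNReal.toReal_le_of_le_ofReal (by positivity) (gammaMeasure_Iio_le ha hr ht.le)
      _ = _ := by rw [mul_rpow hr.le ht.le]; ring

lemma tendsto_rpow_mul_measureReal_gammaMeasure_Iio_const_div {c : ℝ} (ha : 0 < a) (hr : 0 < r)
    (hc : 0 < c) :
    Tendsto (fun ρ ↦ ρ ^ a * (gammaMeasure a r).real (Iio (c / ρ))) atTop
      (𝓝 (c ^ a * (r ^ a / Gamma (a + 1)))) := by
  have hcρ : Tendsto (fun ρ : ℝ ↦ c / ρ) atTop (𝓝[>] 0) :=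
    tendsto_nhdsWithin_iff.2 ⟨tendsto_const_nhds.div_atTop tendsto_id,
      (eventually_gt_atTop 0).mono fun ρ hρ ↦ div_pos hc hρ⟩
  refine ((tendsto_measureReal_gammaMeasure_Iio_div_rpow ha hr).comp hcρ).const_mul (c ^ a)
    |>.congr' ((eventually_gt_atTop 0).mono fun ρ hρ ↦ ?_)
  simp only [Function.comp_apply, div_rpow hc.le hρ.le]
  field_simp

lemma gammaMeasure_Iic_zero : gammaMeasure a r (Iic 0) = 0 := by
  have hae : (Iio 0 : Set ℝ) =ᵐ[gammaMeasure a r] Iic 0 :=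
    (withDensity_absolutelyContinuous _ _).ae_eq Iio_ae_eq_Iic
  rw [← measure_congr hae, gammaMeasure_Iio_eq_lintegral_Ioc le_rfl, Ioc_self,
    Measure.restrict_empty, lintegral_zero_measure]

lemma ae_pos_gammaMeasure : ∀ᵐ x ∂gammaMeasure a r, 0 < x := by
  simp only [ae_iff, not_lt]
  exact gammaMeasure_Iic_zero

lemma lintegral_rpow_neg_gammaMeasure {q : ℝ} (ha : 0 < a) (hr : 0 < r) (hqa : q < a) :
    ∫⁻ x, ENNReal.ofReal (x ^ (-q)) ∂gammaMeasure a r =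
      ENNReal.ofReal (r ^ q * Gamma (a - q) / Gamma a) := by
  have hint : IntegrableOn (fun x ↦ x ^ (a - q - 1) * exp (-(r * x))) (Ioi 0) := by
    simpa using integrableOn_rpow_mul_exp_neg_mul_rpow (p := 1) (by linarith) one_pos hr
  rw [← Measure.restrict_eq_self_of_ae_mem (s := Ioi 0) ae_pos_gammaMeasure, gammaMeasure,
    setLIntegral_withDensity_eq_setLIntegral_mul _ measurable_gammaPDF (by fun_prop)
      measurableSet_Ioi, setLIntegral_congr_fun measurableSet_Ioi (g := fun x ↦
        ENNReal.ofReal (r ^ a / Gamma a * (x ^ (a - q - 1) * exp (-(r * x))))) fun x hx ↦ ?_,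
    ← ofReal_integral_eq_lintegral_ofReal (hint.const_mul _)
      (ae_restrict_of_forall_mem measurableSet_Ioi fun x hx ↦ by have : 0 < x := hx; positivity),
    integral_const_mul, integral_rpow_mul_exp_neg_mul_Ioi (by linarith) hr]
  · congr 1
    rw [one_div, inv_rpow hr.le, ← rpow_neg hr.le]
    field_simp
    rw [← rpow_add hr]
    ring_nf
  · have hx : 0 < x := hx
    rw [Pi.mul_apply, gammaPDF_of_nonneg hx.le, ← ENNReal.ofReal_mul (by positivity)]
    congr 1
    rw [show a - q - 1 = a - 1 + -q by ring, rpow_add hx]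
    ring

lemma measure_Iio_le_max_mul_rpow {ν : Measure ℝ} [IsProbabilityMeasure ν] {C q u : ℝ}
    (hq : 0 ≤ q) (hqa : q ≤ a) (hu : 0 ≤ u) (hν : ν (Iio u) ≤ ENNReal.ofReal (C * u ^ a)) :
    ν (Iio u) ≤ ENNReal.ofReal (max C 1 * u ^ q) := by
  rcases le_or_gt u 1 with hu1 | hu1
  · refine hν.trans (ENNReal.ofReal_le_ofReal ?_)
    calc C * u ^ a ≤ max C 1 * u ^ a :=
          mul_le_mul_of_nonneg_right (le_max_left _ _) (rpow_nonneg hu _)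
      _ ≤ max C 1 * u ^ q := mul_le_mul_of_nonneg_left
          (rpow_le_rpow_of_exponent_ge' hu hu1 hq hqa) (zero_le_one.trans (le_max_right _ _))
  · refine prob_le_one.trans ?_
    rw [← ENNReal.ofReal_one]
    exact ENNReal.ofReal_le_ofReal
      (one_le_mul_of_one_le_of_one_le (le_max_right _ _) (one_le_rpow hu1.le hq))

lemma prod_setOf_mul_lt_le {μ ν : Measure ℝ} [IsProbabilityMeasure ν] {C q s : ℝ}
    (hq : 0 ≤ q) (hqa : q ≤ a) (hs : 0 ≤ s) (hμ : ∀ᵐ x ∂μ, 0 < x)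
    (hν : ∀ u, 0 ≤ u → ν (Iio u) ≤ ENNReal.ofReal (C * u ^ a)) :
    μ.prod ν {p | p.1 * p.2 < s} ≤
      ENNReal.ofReal (max C 1 * s ^ q) * ∫⁻ x, ENNReal.ofReal (x ^ (-q)) ∂μ := by
  rw [Measure.prod_apply (measurableSet_lt (by fun_prop) measurable_const),
    ← lintegral_const_mul _ (by fun_prop)]
  refine lintegral_mono_ae (hμ.mono fun x hx ↦ ?_)
  have hslice : Prod.mk x ⁻¹' {p : ℝ × ℝ | p.1 * p.2 < s} = Iio (s / x) := by
    ext y; simp [lt_div_iff₀' hx]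
  rw [hslice, ← ENNReal.ofReal_mul (by positivity), mul_assoc, rpow_neg hx.le, ← div_eq_mul_inv,
    ← div_rpow hs hx.le]
  exact measure_Iio_le_max_mul_rpow hq hqa (by positivity) (hν _ (by positivity))

lemma tendsto_rpow_mul_measureReal_prod_gammaMeasure_setOf_mul_lt_const_div {b s : ℝ}
    (ha : 0 < a) (hr : 0 < r) (hb : 0 ≤ b) (hba : b < a) (hs : 0 < s) :
    Tendsto (fun ρ ↦ ρ ^ b *
        ((gammaMeasure a r).prod (gammaMeasure a r)).real {p | p.1 * p.2 < s / ρ}) atTop (𝓝 0) := by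
  have := isProbabilityMeasure_gammaMeasure ha hr
  obtain ⟨q, hbq, hqa⟩ := exists_between hba
  set K := max (r ^ a / Gamma (a + 1)) 1 * (r ^ q * Gamma (a - q) / Gamma a)
  have hK : 0 ≤ K := by
    have := Gamma_pos_of_pos (sub_pos.2 hqa)
    have := Gamma_pos_of_pos ha
    positivity
  have hbound : ∀ ρ : ℝ, 0 < ρ →
      ((gammaMeasure a r).prod (gammaMeasure a r)).real {p | p.1 * p.2 < s / ρ} ≤
        K * s ^ q * ρ ^ (-q) := by
    intro ρ hρ
    have h := prod_setOf_mul_lt_le (hb.trans hbq.le) hqa.le (div_pos hs hρ).le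
      (ae_pos_gammaMeasure (a := a) (r := r)) fun u hu ↦ (gammaMeasure_Iio_le ha hr hu).trans_eq (by
        rw [mul_rpow hr.le hu, mul_div_right_comm])
    rw [lintegral_rpow_neg_gammaMeasure ha hr hqa,
      ← ENNReal.ofReal_mul (by positivity)] at h
    refine (ENNReal.toReal_le_of_le_ofReal (by positivity) h).trans_eq ?_
    rw [div_rpow hs.le hρ.le, rpow_neg hρ.le]
    ring
  have hdecay : Tendsto (fun ρ : ℝ ↦ K * s ^ q * ρ ^ (-(q - b))) atTop (𝓝 0) := by
    simpa using (tendsto_rpow_neg_atTop (sub_pos.2 hbq)).const_mul (K * s ^ q)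
  refine tendsto_of_tendsto_of_tendsto_of_le_of_le' tendsto_const_nhds hdecay ?_ ?_ <;>
    filter_upwards [eventually_gt_atTop 0] with ρ hρ
  · positivity
  · calc ρ ^ b * _ ≤ ρ ^ b * (K * s ^ q * ρ ^ (-q)) := by gcongr; exact hbound ρ hρ
      _ = K * s ^ q * ρ ^ (-(q - b)) := by
        rw [neg_sub, sub_eq_add_neg, rpow_add hρ]
        ring

end ProbabilityTheory

lemma ProbabilityTheory.hasLaw_of_map_eq {Ω α : Type*} [MeasurableSpace Ω] [MeasurableSpace α]
    {X : Ω → α} {P : Measure Ω} {μ : Measure α} [NeZero μ] (h : P.map X = μ) : HasLaw X μ P :=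
  ⟨.of_map_ne_zero (h ▸ NeZero.ne μ), h⟩

lemma tendsto_mul_measureReal_of_subset_of_ae_subset_union {ι Ω : Type*} [MeasurableSpace Ω]
    {μ : Measure Ω} [IsFiniteMeasure μ] {l : Filter ι} {f : ι → ℝ} {A B E : ι → Set Ω} {L : ℝ}
    (hf : ∀ᶠ i in l, 0 ≤ f i) (hAE : ∀ᶠ i in l, A i ⊆ E i)
    (hEAB : ∀ᶠ i in l, E i ≤ᵐ[μ] (A i ∪ B i : Set Ω))
    (hA : Tendsto (fun i ↦ f i * μ.real (A i)) l (𝓝 L))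
    (hB : Tendsto (fun i ↦ f i * μ.real (B i)) l (𝓝 0)) :
    Tendsto (fun i ↦ f i * μ.real (E i)) l (𝓝 L) := by
  refine tendsto_of_tendsto_of_tendsto_of_le_of_le' hA (by simpa using hA.add hB) ?_ ?_
  · filter_upwards [hf, hAE] with i hfi hi using mul_le_mul_of_nonneg_left (measureReal_mono hi) hfi
  · filter_upwards [hf, hEAB] with i hfi hi
    rw [← mul_add]
    refine mul_le_mul_of_nonneg_left ?_ hfi
    calc μ.real (E i) ≤ μ.real (A i ∪ B i) :=
          ENNReal.toReal_mono (measure_ne_top _ _) (measure_mono_ae hi)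
      _ ≤ _ := measureReal_union_le _ _

lemma first_hop_lt_iff {θ d₁ γ ρ w : ℝ} (hθ : θ < 1) (hd₁ : 0 < d₁) (hρ : 0 < ρ) :
    (1 - θ) * ρ * w / d₁ < γ ↔ w < d₁ * γ / (1 - θ) / ρ := by
  have : 0 < 1 - θ := sub_pos.2 hθ
  rw [div_lt_iff₀ hd₁, div_div, lt_div_iff₀ (by positivity)]
  constructor <;> intro h <;> linarith

lemma lt_of_second_hop_lt {η θ d₁ d₂ γ ρ x z e : ℝ} (hη : 0 < η) (hθ : 0 < θ) (hd₁ : 0 < d₁)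
    (hd₂ : 0 < d₂) (hρ : 0 < ρ) (hz : 0 ≤ z) (he : 0 ≤ e)
    (h : η * θ / d₂ * (ρ * x / d₁ + e) * z < γ) : x * z < γ * d₁ * d₂ / (η * θ) / ρ := by
  have hdrop : η * θ / d₂ * (ρ * x / d₁) * z ≤ η * θ / d₂ * (ρ * x / d₁ + e) * z := by
    gcongr
    exact le_add_of_nonneg_right he
  have hfactor : η * θ / d₂ * (ρ * x / d₁) * z = x * z * (η * θ * ρ) / (d₁ * d₂) := by
    field_simp
  have hlt := hdrop.trans_lt h
  rw [hfactor, div_lt_iff₀ (by positivity)] at hlt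
  rw [div_div, lt_div_iff₀ (by positivity)]
  linarith

theorem zf_mrt_high_snr_outage_general
    {Ω : Type*} [MeasureSpace Ω] [IsProbabilityMeasure (ℙ : Measure Ω)]
    (N : ℕ) (hN : 2 ≤ N) (W X Z Y : Ω → ℝ)
    (hXZ : IndepFun X Z ℙ)
    (hW : Measure.map W ℙ = gammaMeasure ((N : ℝ) - 1) 1)
    (hX : Measure.map X ℙ = gammaMeasure N 1)
    (hZ : Measure.map Z ℙ = gammaMeasure N 1)
    (hY : ∀ ω, 0 ≤ Y ω)
    (θ η d₁ dI d₂ γ ρI : ℝ) (hθ : θ ∈ Set.Ioo (0 : ℝ) 1)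
    (hη : 0 < η) (hd₁ : 0 < d₁) (hdI : 0 < dI) (hd₂ : 0 < d₂)
    (hγ : 0 < γ) (hρI : 0 < ρI) :
    Tendsto (fun ρ : ℝ => ρ ^ (N - 1) *
        (ℙ {ω | min ((1 - θ) * ρ * W ω / d₁)
            ((η * θ / d₂) * (ρ * X ω / d₁ + ρI * Y ω / dI) * Z ω) < γ}).toReal)
      atTop
      (nhds ((d₁ * γ / (1 - θ)) ^ (N - 1) / (Nat.factorial (N - 1) : ℝ))) := by
  obtain ⟨hθ0, hθ1⟩ := hθ
  have hN1 : ((N - 1 : ℕ) : ℝ) = (N : ℝ) - 1 := Nat.cast_pred (by omega)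
  have hNW : (0 : ℝ) < (N - 1 : ℕ) := Nat.cast_pos.2 (by omega)
  rw [← hN1] at hW
  have := isProbabilityMeasure_gammaMeasure hNW one_pos
  have := isProbabilityMeasure_gammaMeasure (a := N) (by positivity) one_pos
  have lawXZ := hXZ.hasLaw_prod (hasLaw_of_map_eq hX) (hasLaw_of_map_eq hZ)
  set c := d₁ * γ / (1 - θ)
  set s := γ * d₁ * d₂ / (η * θ)
  have hfirst : Tendsto (fun ρ : ℝ ↦ ρ ^ (N - 1) * (ℙ : Measure Ω).real {ω | W ω < c / ρ}) atTop
      (𝓝 (c ^ (N - 1) / (N - 1).factorial)) := by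
    have h := tendsto_rpow_mul_measureReal_gammaMeasure_Iio_const_div hNW one_pos
      (show 0 < c by have := sub_pos.2 hθ1; positivity)
    simp only [rpow_natCast, one_pow, Gamma_nat_eq_factorial, mul_one_div] at h
    refine h.congr fun ρ ↦ ?_
    rw [(hasLaw_of_map_eq hW).measureReal_eq (p := (· < c / ρ)) measurableSet_Iio]
    rfl
  have hsecond : Tendsto (fun ρ : ℝ ↦ ρ ^ (N - 1) * (ℙ : Measure Ω).real {ω | X ω * Z ω < s / ρ})
      atTop (𝓝 0) := by
    have h := tendsto_rpow_mul_measureReal_prod_gammaMeasure_setOf_mul_lt_const_div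
      (a := N) (r := 1) (by positivity) one_pos hNW.le (by rw [hN1]; linarith)
      (show 0 < s by positivity)
    simp only [rpow_natCast] at h
    refine h.congr fun ρ ↦ ?_
    rw [lawXZ.measureReal_eq (p := fun p ↦ p.1 * p.2 < s / ρ)
      (measurableSet_lt (by fun_prop) measurable_const)]
  have hZpos : ∀ᵐ ω ∂(ℙ : Measure Ω), 0 < Z ω :=
    ((hasLaw_of_map_eq hZ).ae_iff (measurableSet_Ioi (a := 0)).mem).2 ae_pos_gammaMeasure
  refine tendsto_mul_measureReal_of_subset_of_ae_subset_union
    ((eventually_ge_atTop 0).mono fun ρ hρ ↦ by positivity) ?_ ?_ hfirst hsecond <;>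
    filter_upwards [eventually_gt_atTop 0] with ρ hρ
  · exact fun ω hω ↦ min_lt_iff.2 (Or.inl ((first_hop_lt_iff hθ1 hd₁ hρ).2 hω))
  · filter_upwards [hZpos] with ω hz (hω : min _ _ < γ)
    rcases min_lt_iff.1 hω with h | h
    · exact Or.inl ((first_hop_lt_iff hθ1 hd₁ hρ).1 h)
    · exact Or.inr (lt_of_second_hop_lt hη hθ0 hd₁ hd₂ hρ hz.le (by have := hY ω; positivity) h)

/-- **Theorem 8** (high-SNR outage of the ZF/MRT scheme): let `N ≥ 2`, let `W ~ Gamma(N−1,1)`,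
let `X, Z ~ Gamma(N,1)` be independent, and let `Y ≥ 0` be an arbitrary nonnegative random
variable (`W` and `Y` may depend arbitrarily on the other variables). For `θ ∈ (0,1)` and
`η, d₁, d_I, d₂, γ, ρ_I > 0`,
`ρ^{N−1} · Prob(min((1−θ)ρW/d₁, (ηθ/d₂)(ρX/d₁ + ρ_I Y/d_I)Z) < γ)
  → (d₁γ/(1−θ))^{N−1}/(N−1)!` as `ρ → ∞`;
in particular the ZF/MRT scheme achieves diversity order `N−1`. -/
theorem zf_mrt_high_snr_outage
    {Ω : Type*} [MeasureSpace Ω] [IsProbabilityMeasure (ℙ : Measure Ω)]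
    (N : ℕ) (hN : 2 ≤ N) (W X Z Y : Ω → ℝ)
    (hXZ : IndepFun X Z ℙ)
    (hW : Measure.map W ℙ = gammaMeasure ((N : ℝ) - 1) 1)
    (hX : Measure.map X ℙ = gammaMeasure N 1)
    (hZ : Measure.map Z ℙ = gammaMeasure N 1)
    (hY : ∀ ω, 0 ≤ Y ω) (hYm : Measurable Y) (hWm : Measurable W)
    (θ η d₁ dI d₂ γ ρI : ℝ) (hθ : θ ∈ Set.Ioo (0 : ℝ) 1)
    (hη : 0 < η) (hd₁ : 0 < d₁) (hdI : 0 < dI) (hd₂ : 0 < d₂)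
    (hγ : 0 < γ) (hρI : 0 < ρI) :
    Tendsto (fun ρ : ℝ => ρ ^ (N - 1) *
        (ℙ {ω | min ((1 - θ) * ρ * W ω / d₁)
            ((η * θ / d₂) * (ρ * X ω / d₁ + ρI * Y ω / dI) * Z ω) < γ}).toReal)
      atTop
      (nhds ((d₁ * γ / (1 - θ)) ^ (N - 1) / (Nat.factorial (N - 1) : ℝ))) :=
  zf_mrt_high_snr_outage_general N hN W X Z Y hXZ hW hX hZ hY θ η d₁ dI d₂ γ ρI hθ hη hd₁ hdI hd₂ hγ
    hρI
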